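/- arXiv:math/0210077 — 3 statements merged into one kernel-verified Lean document; each statement's English description precedes it below -/
import Mathlib

section
/- Let B be the minimal monomial generating set of In(I), E_i = { v ∈ ℕ^{n-i} : x^v ∈ B and x^v involves none of x_{n-i+1},...,x_n }, and p_j : ℕ^{n-i} → ℕ^{n-i-1} the deletion of the j-th coordinate. Then c_i(I) < ∞ if and only if for every a ∈ p_{n-i}(E_i) \ E_{i+1} there exist b_1,...,b_{n-i-1} ∈ E_{i+1} with p_j(a) ≥ p_j(b_j) componentwise for each j = 1,...,n-i-1. -/
open MvPolynomial

noncomputable section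

/-- Coercion of a natural number into `WithBot ℕ∞` (degrees, with `⊥ = -∞`, `⊤ = ∞`). -/
def natW (r : ℕ) : WithBot ℕ∞ := ((r : ℕ∞) : WithBot ℕ∞)

/-- The total degree `|a|` of an exponent vector. -/
def degOf {n : ℕ} (a : Fin n →₀ ℕ) : ℕ := a.sum fun _ e => e

variable {k : Type*} [Field k] {n : ℕ}

/-- The top degree in which the graded pieces of two ideals differ
(`⊥` if they never differ, `⊤` if they differ in unboundedly many degrees). -/
def topDiff (I J : Ideal (MvPolynomial (Fin n) k)) : WithBot ℕ∞ :=
  sSup {x | ∃ r : ℕ, x = natW r ∧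
    ¬ ∀ f : MvPolynomial (Fin n) k, f.IsHomogeneous r → (f ∈ I ↔ f ∈ J)}

/-- `I` is a homogeneous (graded) ideal. -/
def HomogIdeal (I : Ideal (MvPolynomial (Fin n) k)) : Prop :=
  ∀ f ∈ I, ∀ r : ℕ, homogeneousComponent r f ∈ I

/-- The maximal homogeneous ideal `𝔪 = (x₁, …, xₙ)`. -/
def maxIdl (k : Type*) [Field k] (n : ℕ) : Ideal (MvPolynomial (Fin n) k) :=
  Ideal.span (Set.range X)

/-- The ideal `(I, z₁, …, z_i)`. -/
def partIdeal (I : Ideal (MvPolynomial (Fin n) k)) {m : ℕ}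
    (z : Fin m → MvPolynomial (Fin n) k) (i : ℕ) : Ideal (MvPolynomial (Fin n) k) :=
  I ⊔ Ideal.span (z '' {j : Fin m | (j : ℕ) < i})

/-- `a_z^i(S/I) = sup { r : [(I,z₁,…,z_i) : z_{i+1}]_r ≠ (I,z₁,…,z_i)_r }`. -/
def aInv (I : Ideal (MvPolynomial (Fin n) k)) {m : ℕ}
    (z : Fin m → MvPolynomial (Fin n) k) (i : Fin m) : WithBot ℕ∞ :=
  topDiff ((partIdeal I z (i : ℕ)).colon (Ideal.span {z i})) (partIdeal I z (i : ℕ))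

/-- `z` is a filter-regular sequence for `S/I`: each `z_{i+1}` avoids every associated
prime of `(I,z₁,…,z_i)` other than the maximal homogeneous ideal. -/
def FilterRegular (I : Ideal (MvPolynomial (Fin n) k)) {m : ℕ}
    (z : Fin m → MvPolynomial (Fin n) k) : Prop :=
  ∀ i : Fin m, ∀ p : Ideal (MvPolynomial (Fin n) k),
    IsAssociatedPrime p (MvPolynomial (Fin n) k ⧸ partIdeal I z (i : ℕ)) →
    p ≠ maxIdl k n → z i ∉ p

/-- The saturation `⋃_{m ≥ 1} (J : z^m)`. -/
def satIdeal (J : Ideal (MvPolynomial (Fin n) k)) (z : MvPolynomial (Fin n) k) :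
    Ideal (MvPolynomial (Fin n) k) :=
  ⨆ m : ℕ, J.colon (Ideal.span {z ^ (m + 1)})

/-- `a <_drevlex b` for the degree reverse lexicographic order with `x₁ > x₂ > … > xₙ`. -/
def RevLexLT {n : ℕ} (a b : Fin n →₀ ℕ) : Prop :=
  degOf a < degOf b ∨
    (degOf a = degOf b ∧ ∃ j : Fin n, b j < a j ∧ ∀ l : Fin n, j < l → a l = b l)

/-- The initial ideal of `I` with respect to the reverse lexicographic order:
the ideal generated by the leading monomials of the nonzero elements of `I`. -/
def initialIdeal (I : Ideal (MvPolynomial (Fin n) k)) : Ideal (MvPolynomial (Fin n) k) :=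
  Ideal.span {g | ∃ f ∈ I, f ≠ 0 ∧ ∃ μ ∈ f.support,
    (∀ ν ∈ f.support, ν = μ ∨ RevLexLT ν μ) ∧ g = monomial μ (1 : k)}

/-- The evaluation `x_{n-i+1} = ⋯ = x_n = 0`. -/
def evalZero (k : Type*) [Field k] (n i : ℕ) :
    MvPolynomial (Fin n) k →ₐ[k] MvPolynomial (Fin n) k :=
  aeval fun j : Fin n => if (j : ℕ) < n - i then X j else 0

/-- The evaluation `x_{n-i+1} = ⋯ = x_n = 0`, `x_{n-i} = 1`. -/
def evalOne (k : Type*) [Field k] (n i : ℕ) :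
    MvPolynomial (Fin n) k →ₐ[k] MvPolynomial (Fin n) k :=
  aeval fun j : Fin n =>
    if (j : ℕ) < n - i - 1 then X j else if (j : ℕ) = n - i - 1 then 1 else 0

/-- `J_i`: the ideal obtained from `In(I)` by evaluating `x_{n-i+1} = ⋯ = x_n = 0`. -/
def Jlow (i : ℕ) (I : Ideal (MvPolynomial (Fin n) k)) : Ideal (MvPolynomial (Fin n) k) :=
  Ideal.map (evalZero k n i) (initialIdeal I)

/-- `J̃_i`: the ideal obtained from `J_i` by the further evaluation `x_{n-i} = 1`. -/
def Jtil (i : ℕ) (I : Ideal (MvPolynomial (Fin n) k)) : Ideal (MvPolynomial (Fin n) k) :=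
  Ideal.map (evalOne k n i) (initialIdeal I)

/-- `c_i(I) = sup { r : (J̃_i/J_i)_r ≠ 0 }`, computed in `S_i = k[x₁,…,x_{n-i}]`. -/
def cInv (i : ℕ) (I : Ideal (MvPolynomial (Fin n) k)) : WithBot ℕ∞ :=
  sSup {x | ∃ r : ℕ, x = natW r ∧ ∃ f : MvPolynomial (Fin n) k,
    f ∈ Jtil i I ∧ f ∈ supported k {j : Fin n | (j : ℕ) < n - i} ∧
    f.IsHomogeneous r ∧ f ∉ Jlow i I}

/-- `r(I) = sup { r : (S_d/J_d)_r ≠ 0 }`. -/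
def rInv (d : ℕ) (I : Ideal (MvPolynomial (Fin n) k)) : WithBot ℕ∞ :=
  sSup {x | ∃ r : ℕ, x = natW r ∧ ∃ f : MvPolynomial (Fin n) k,
    f ∈ supported k {j : Fin n | (j : ℕ) < n - d} ∧ f.IsHomogeneous r ∧ f ∉ Jlow d I}

/-- The partial regularity `reg_t(S/I)`, via its characterization
`reg_t(S/I) = max_i a_z^i(S/I)` for any filter-regular sequence `z` of `t+1` linear forms
([T1, Proposition 2.2]; equal to `max { aᵢ(S/I) + i : i ≤ t }` in terms of local cohomology). -/
def regT (t : ℕ) (I : Ideal (MvPolynomial (Fin n) k)) : WithBot ℕ∞ :=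
  sSup {x | ∃ z : Fin (t + 1) → MvPolynomial (Fin n) k,
    (∀ j, (z j).IsHomogeneous 1) ∧ FilterRegular I z ∧
    x = ⨆ i : Fin (t + 1), aInv I z i}

/-- The Castelnuovo–Mumford regularity `reg(S/I)`, via its characterization
`reg(S/I) = max { a_z^0, …, a_z^{d-1}, r_z(S/I) }` for any filter-regular sequence `z`
of `d = dim S/I` linear forms ([BS, Theorem 1.10], [T1, Corollary 3.3]). -/
def regCM (I : Ideal (MvPolynomial (Fin n) k)) : WithBot ℕ∞ :=
  sSup {x | ∃ d : ℕ, ringKrullDim (MvPolynomial (Fin n) k ⧸ I) = natW d ∧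
    ∃ z : Fin d → MvPolynomial (Fin n) k,
      (∀ j, (z j).IsHomogeneous 1) ∧ FilterRegular I z ∧
      x = (⨆ i : Fin d, aInv I z i) ⊔ topDiff ⊤ (I ⊔ Ideal.span (Set.range z))}

/-- The exponent vectors of the minimal monomial generators of a monomial ideal. -/
def minGens (I : Ideal (MvPolynomial (Fin n) k)) : Set (Fin n →₀ ℕ) :=
  {μ | monomial μ (1 : k) ∈ I ∧
    ∀ ν : Fin n →₀ ℕ, monomial ν (1 : k) ∈ I → ν ≤ μ → ν = μ}

/-- `E_i`: the exponent vectors of the minimal generators of `In(I)` involving none of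
the variables `x_{n-i+1}, …, x_n`. -/
def Evar (i : ℕ) (I : Ideal (MvPolynomial (Fin n) k)) : Set (Fin n →₀ ℕ) :=
  {μ ∈ minGens (initialIdeal I) | ∀ j : Fin n, n - i ≤ (j : ℕ) → μ j = 0}

/-- The set `F` of corners of the staircase determined by `E`:
vectors `a = max(v₁,…,v_s) - (1,…,1)` where `v j ∈ E`, the `j`-th coordinate of `v j`
strictly exceeds that of `v h` for `h ≠ j`, and `a ≱ w` for all `w ∈ E`. -/
def corners {s : ℕ} (E : Set (Fin s →₀ ℕ)) : Set (Fin s →₀ ℕ) :=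
  {a | (∃ v : Fin s → (Fin s →₀ ℕ), (∀ j, v j ∈ E) ∧
      (∀ j h : Fin s, h ≠ j → v h j < v j j) ∧
      ∀ l : Fin s, a l + 1 = Finset.univ.sup fun j => v j l) ∧
    ∀ w ∈ E, ¬ w ≤ a}

/-
Evaluating variables at `0` or `1` sends each monomial to a monomial or to `0`, so `J_i` is the
monomial ideal generated by `E_i` and `J̃_i` the one generated by `p_{n-i}(E_i)`. Hence `J̃_i / J_i`
has a basis of monomials `x^ν` with `ν ≥ p_{n-i}(v)` for some `v ∈ E_i` and `ν ≱ m` for all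
`m ∈ E_i`, and `c_i(I) < ∞` says that their degrees are bounded. If the condition fails for
`a = p_{n-i}(v)` and `j`, then `a + N e_j` is such an exponent for every `N`. If it holds, no
coordinate of such a `ν` reaches the bound `D` on the coordinates of the minimal generators: a
larger `j`-th coordinate would put `ν` above `b_j` (above `v` when `j = n-i`), so `|ν| ≤ nD`.
-/


lemma sSup_natW_lt_top_iff (P : ℕ → Prop) :
    sSup {x : WithBot ℕ∞ | ∃ r : ℕ, x = natW r ∧ P r} < ⊤ ↔ BddAbove {r | P r} := by
  set S := {x : WithBot ℕ∞ | ∃ r : ℕ, x = natW r ∧ P r}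
  have hmem : ∀ {r}, P r → natW r ∈ S := fun hr => ⟨_, rfl, hr⟩
  constructor
  · intro h
    obtain ⟨N, hN⟩ : ∃ N : ℕ, sSup S ≤ natW N := by
      rcases h' : sSup S with _ | c
      · exact ⟨0, bot_le⟩
      · obtain ⟨N, rfl⟩ := ENat.ne_top_iff_exists.mp (WithBot.coe_lt_coe.mp (h' ▸ h)).ne
        exact ⟨N, le_rfl⟩
    exact ⟨N, fun r hr => by simpa [natW] using (le_sSup (hmem hr)).trans hN⟩
  · rintro ⟨N, hN⟩
    refine lt_of_le_of_lt (sSup_le ?_) (WithBot.coe_lt_coe.mpr (ENat.natCast_lt_top N))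
    rintro _ ⟨r, rfl, hr⟩
    simpa [natW] using hN hr

lemma degOf_eq_degree (a : Fin n →₀ ℕ) : degOf a = a.degree := rfl

section MonomialIdeal

variable {σ τ R : Type*} [CommSemiring R]

variable (R) in
def monomialIdeal (S : Set (σ →₀ ℕ)) : Ideal (MvPolynomial σ R) :=
  Ideal.span ((fun μ => monomial μ (1 : R)) '' S)

lemma monomial_mem_monomialIdeal {S : Set (σ →₀ ℕ)} {μ : σ →₀ ℕ} (hμ : μ ∈ S) :
    monomial μ (1 : R) ∈ monomialIdeal R S :=
  Ideal.subset_span ⟨μ, hμ, rfl⟩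

lemma mem_monomialIdeal_iff {S : Set (σ →₀ ℕ)} {f : MvPolynomial σ R} :
    f ∈ monomialIdeal R S ↔ ∀ ν ∈ f.support, ∃ μ ∈ S, μ ≤ ν :=
  mem_ideal_span_monomial_image

lemma monomial_mem_monomialIdeal_iff [Nontrivial R] {S : Set (σ →₀ ℕ)} {ν : σ →₀ ℕ} :
    monomial ν (1 : R) ∈ monomialIdeal R S ↔ ∃ μ ∈ S, μ ≤ ν := by
  classical
  rw [mem_monomialIdeal_iff, support_monomial, if_neg one_ne_zero]
  simp

lemma map_monomialIdeal {F : Type*} [FunLike F (MvPolynomial σ R) (MvPolynomial τ R)]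
    [RingHomClass F (MvPolynomial σ R) (MvPolynomial τ R)] (φ : F) (S : Set (σ →₀ ℕ))
    (P : (σ →₀ ℕ) → Prop) (g : (σ →₀ ℕ) → τ →₀ ℕ)
    (hP : ∀ μ ∈ S, P μ → φ (monomial μ 1) = monomial (g μ) 1)
    (hnP : ∀ μ ∈ S, ¬ P μ → φ (monomial μ 1) = 0) :
    (monomialIdeal R S).map φ = monomialIdeal R (g '' {μ ∈ S | P μ}) := by
  rw [monomialIdeal, Ideal.map_span, Set.image_image]
  apply le_antisymm
  · rw [Ideal.span_le]
    rintro _ ⟨μ, hμ, rfl⟩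
    dsimp only
    by_cases h : P μ
    · rw [hP μ hμ h]
      exact monomial_mem_monomialIdeal ⟨μ, ⟨hμ, h⟩, rfl⟩
    · rw [hnP μ hμ h]
      exact zero_mem _
  · rw [monomialIdeal, Ideal.span_le]
    rintro _ ⟨_, ⟨μ, ⟨hμ, h⟩, rfl⟩, rfl⟩
    dsimp only
    rw [← hP μ hμ h]
    exact Ideal.subset_span ⟨μ, hμ, rfl⟩

lemma aeval_monomial_one_eq_zero {f : σ → MvPolynomial τ R} {μ : σ →₀ ℕ} {j : σ}
    (hj : μ j ≠ 0) (hf : f j = 0) : aeval f (monomial μ (1 : R)) = 0 := by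
  rw [aeval_monomial, map_one, one_mul]
  exact Finset.prod_eq_zero (Finsupp.mem_support_iff.mpr hj) (by simp only [hf, zero_pow hj])

lemma aeval_monomial_one_of_eqOn {f : σ → MvPolynomial σ R} {μ : σ →₀ ℕ}
    (hf : ∀ j ∈ μ.support, f j = X j) : aeval f (monomial μ (1 : R)) = monomial μ 1 := by
  rw [aeval_monomial, map_one, one_mul, monomial_eq, C_1, one_mul]
  exact Finsupp.prod_congr fun j hj => by rw [hf j hj]

lemma aeval_monomial_one_eq_erase {f : σ → MvPolynomial σ R} {μ : σ →₀ ℕ} {s : σ}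
    (hs : f s = 1) (hf : ∀ j ∈ μ.support, j ≠ s → f j = X j) :
    aeval f (monomial μ (1 : R)) = monomial (μ.erase s) 1 := by
  classical
  have hsplit : monomial μ (1 : R) =
      monomial (Finsupp.single s (μ s)) 1 * monomial (μ.erase s) 1 := by
    rw [monomial_mul, mul_one, Finsupp.single_add_erase]
  rw [hsplit, map_mul, aeval_monomial, map_one, one_mul, Finsupp.prod_single_index (by simp),
    hs, one_pow, one_mul, aeval_monomial_one_of_eqOn]
  intro j hj
  rw [Finsupp.support_erase, Finset.mem_erase] at hj
  exact hf j hj.2 hj.1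

lemma apply_eq_zero_of_mem_supported {f : MvPolynomial σ R} {S : Set σ}
    (hf : f ∈ supported R S) {ν : σ →₀ ℕ} (hν : ν ∈ f.support) {j : σ} (hj : j ∉ S) :
    ν j = 0 := by
  by_contra h
  exact hj (mem_supported.mp hf
    ((mem_vars_iff_mem_support j).mpr ⟨ν, hν, Finsupp.mem_support_iff.mpr h⟩))

end MonomialIdeal

section MinimalGenerators

lemma exists_mem_minGens_le {J : Ideal (MvPolynomial (Fin n) k)} {μ : Fin n →₀ ℕ}
    (h : monomial μ (1 : k) ∈ J) : ∃ m ∈ minGens J, m ≤ μ := by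
  obtain ⟨m, hmμ, hm, hmin⟩ :=
    exists_minimal_le_of_wellFoundedLT (fun ν => monomial ν (1 : k) ∈ J) μ h
  exact ⟨m, ⟨hm, fun ν hν hle => le_antisymm hle (hmin hν hle)⟩, hmμ⟩

lemma minGens_finite (J : Ideal (MvPolynomial (Fin n) k)) : (minGens J).Finite :=
  IsAntichain.finite_of_partiallyWellOrderedOn (fun _ ha _ hb hne hle => hne (hb.2 _ ha.1 hle))
    (Set.isPWO_of_wellQuasiOrderedLE _)

lemma monomialIdeal_minGens (S : Set (Fin n →₀ ℕ)) :
    monomialIdeal k (minGens (monomialIdeal k S)) = monomialIdeal k S := by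
  apply le_antisymm
  · rw [monomialIdeal, Ideal.span_le]
    rintro _ ⟨μ, hμ, rfl⟩
    exact hμ.1
  · rw [monomialIdeal, Ideal.span_le]
    rintro _ ⟨μ, hμ, rfl⟩
    exact monomial_mem_monomialIdeal_iff.mpr
      (exists_mem_minGens_le (monomial_mem_monomialIdeal hμ))

end MinimalGenerators

-- With `E = E_i` and `s = n - i - 1` (the variable `x_{n-i}`, counting from `0`), these are the
-- exponents of the monomials forming a basis of `J̃_i / J_i`.
def quotExponents (E : Set (Fin n →₀ ℕ)) (s : Fin n) : Set (Fin n →₀ ℕ) :=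
  {ν | (∀ j, s < j → ν j = 0) ∧ (∃ v ∈ E, v.erase s ≤ ν) ∧ ∀ m ∈ E, ¬ m ≤ ν}

section Staircase

variable {E : Set (Fin n →₀ ℕ)} {s : Fin n}

lemma le_of_forall_ne_le {a b : Fin n →₀ ℕ} (l : Fin n) (h : ∀ l', l' ≠ l → a l' ≤ b l')
    (hl : a l ≤ b l) : a ≤ b := fun l' => by
  by_cases hl' : l' = l
  · exact hl' ▸ hl
  · exact h l' hl'

lemma erase_add_single_mem_quotExponents (hE : ∀ v ∈ E, ∀ j, s < j → v j = 0)
    {v : Fin n →₀ ℕ} (hv : v ∈ E) {j : Fin n} (hj : j < s)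
    (hb : ¬ ∃ b ∈ {m ∈ E | m s = 0}, ∀ l, l ≠ j → b l ≤ v.erase s l) (N : ℕ) :
    v.erase s + Finsupp.single j N ∈ quotExponents E s := by
  refine ⟨fun l hl => ?_, ⟨v, hv, le_self_add⟩, fun m hm hmν => hb ⟨m, ⟨hm, ?_⟩, fun l hl => ?_⟩⟩
  · simp [Finsupp.erase_ne hl.ne', hE v hv l hl, Finsupp.single_eq_of_ne (hj.trans hl).ne']
  · simpa [Finsupp.single_eq_of_ne hj.ne'] using hmν s
  · simpa [Finsupp.single_eq_of_ne hl] using hmν l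

lemma apply_lt_of_mem_quotExponents {D : ℕ} (hD : ∀ m ∈ E, ∀ l, m l < D)
    (hE : ∀ a, (∃ v ∈ E, a = v.erase s) → a ∉ {m ∈ E | m s = 0} → ∀ j, j < s →
      ∃ b ∈ {m ∈ E | m s = 0}, ∀ l, l ≠ j → b l ≤ a l)
    {ν : Fin n →₀ ℕ} (hν : ν ∈ quotExponents E s) (l : Fin n) : ν l < D := by
  obtain ⟨hν0, ⟨v, hv, hvν⟩, hνE⟩ := hν
  rcases lt_trichotomy l s with hl | rfl | hl
  · obtain ⟨b, ⟨hb, -⟩, hbv⟩ :=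
      hE _ ⟨v, hv, rfl⟩ (fun h => hνE _ h.1 hvν) l hl
    by_contra! hDl
    exact hνE b hb (le_of_forall_ne_le l (fun l' hl' => (hbv l' hl').trans (hvν l'))
      ((hD b hb l).le.trans hDl))
  · by_contra! hDl
    refine hνE v hv (le_of_forall_ne_le l (fun l' hl' => ?_) ((hD v hv l).le.trans hDl))
    simpa [Finsupp.erase_ne hl'] using hvν l'
  · rw [hν0 l hl]
    exact (Nat.zero_le _).trans_lt (hD v hv l)

theorem bddAbove_degOf_quotExponents_iff (hE : E.Finite)
    (hE0 : ∀ v ∈ E, ∀ j, s < j → v j = 0) :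
    BddAbove (degOf '' quotExponents E s) ↔
      ∀ a, (∃ v ∈ E, a = v.erase s) → a ∉ {m ∈ E | m s = 0} → ∀ j, j < s →
        ∃ b ∈ {m ∈ E | m s = 0}, ∀ l, l ≠ j → b l ≤ a l := by
  constructor
  · rintro ⟨N, hN⟩ _ ⟨v, hv, rfl⟩ - j hj
    by_contra hb
    have := hN ⟨_, erase_add_single_mem_quotExponents hE0 hv hj hb (N + 1), rfl⟩
    simp only [degOf_eq_degree, map_add, Finsupp.degree_single] at this
    omega
  · intro hcond
    obtain ⟨D, hD⟩ := (hE.image degOf).bddAbove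
    have hD' : ∀ m ∈ E, ∀ l, m l < D + 1 := fun m hm l =>
      Nat.lt_succ_of_le ((Finsupp.le_degree l m).trans (hD ⟨m, hm, rfl⟩))
    refine ⟨n * (D + 1), ?_⟩
    rintro _ ⟨ν, hν, rfl⟩
    rw [degOf_eq_degree, Finsupp.degree_eq_sum]
    simpa using Finset.sum_le_card_nsmul Finset.univ ν (D + 1)
      fun l _ => (apply_lt_of_mem_quotExponents hD' hcond hν l).le

end Staircase

section EvaluatedInitialIdeal

variable {I : Ideal (MvPolynomial (Fin n) k)} {i : ℕ} {s : Fin n}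

lemma initialIdeal_eq_monomialIdeal_minGens :
    initialIdeal I = monomialIdeal k (minGens (initialIdeal I)) := by
  have h : initialIdeal I = monomialIdeal k {μ | ∃ f ∈ I, f ≠ 0 ∧ μ ∈ f.support ∧
      ∀ ν ∈ f.support, ν = μ ∨ RevLexLT ν μ} := by
    rw [initialIdeal, monomialIdeal]
    congr 1
    ext g
    constructor
    · rintro ⟨f, hf, hf0, μ, hμ, hlead, rfl⟩
      exact ⟨μ, ⟨f, hf, hf0, hμ, hlead⟩, rfl⟩
    · rintro ⟨μ, ⟨f, hf, hf0, hμ, hlead⟩, rfl⟩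
      exact ⟨f, hf, hf0, μ, hμ, hlead, rfl⟩
  rw [h, monomialIdeal_minGens]

lemma evalZero_monomial_of_forall {μ : Fin n →₀ ℕ} (h : ∀ j : Fin n, n - i ≤ (j : ℕ) → μ j = 0) :
    evalZero k n i (monomial μ 1) = monomial μ 1 :=
  aeval_monomial_one_of_eqOn fun j hj =>
    if_pos (by by_contra hj'; exact Finsupp.mem_support_iff.mp hj (h j (by omega)))

lemma evalZero_monomial_of_not_forall {μ : Fin n →₀ ℕ}
    (h : ¬ ∀ j : Fin n, n - i ≤ (j : ℕ) → μ j = 0) : evalZero k n i (monomial μ 1) = 0 := by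
  push Not at h
  obtain ⟨j, hj, hμj⟩ := h
  exact aeval_monomial_one_eq_zero hμj (if_neg (by omega))

lemma evalOne_monomial_of_forall (hs : (s : ℕ) + 1 = n - i) {μ : Fin n →₀ ℕ}
    (h : ∀ j : Fin n, n - i ≤ (j : ℕ) → μ j = 0) :
    evalOne k n i (monomial μ 1) = monomial (μ.erase s) 1 := by
  refine aeval_monomial_one_eq_erase (by rw [if_neg (by omega), if_pos (by omega)])
    fun j hj hjs => if_pos ?_
  have : (j : ℕ) ≠ s := fun h => hjs (Fin.ext h)
  by_contra hj'
  exact Finsupp.mem_support_iff.mp hj (h j (by omega))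

lemma evalOne_monomial_of_not_forall (hs : (s : ℕ) + 1 = n - i) {μ : Fin n →₀ ℕ}
    (h : ¬ ∀ j : Fin n, n - i ≤ (j : ℕ) → μ j = 0) : evalOne k n i (monomial μ 1) = 0 := by
  push Not at h
  obtain ⟨j, hj, hμj⟩ := h
  exact aeval_monomial_one_eq_zero hμj (by rw [if_neg (by omega), if_neg (by omega)])

lemma Jlow_eq_monomialIdeal :
    Jlow i I = monomialIdeal k (Evar i I) := by
  rw [Jlow, initialIdeal_eq_monomialIdeal_minGens,
    map_monomialIdeal _ _ _ id (fun _ _ => evalZero_monomial_of_forall)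
      (fun _ _ => evalZero_monomial_of_not_forall), Set.image_id]
  rfl

lemma Jtil_eq_monomialIdeal (hs : (s : ℕ) + 1 = n - i) :
    Jtil i I = monomialIdeal k ((·.erase s) '' Evar i I) := by
  rw [Jtil, initialIdeal_eq_monomialIdeal_minGens,
    map_monomialIdeal _ _ _ _ (fun _ _ => evalOne_monomial_of_forall hs)
      (fun _ _ => evalOne_monomial_of_not_forall hs)]
  rfl

lemma Evar_finite : (Evar i I).Finite :=
  (minGens_finite _).subset fun _ h => h.1

lemma apply_eq_zero_of_mem_Evar (hs : (s : ℕ) + 1 = n - i) {v : Fin n →₀ ℕ} (hv : v ∈ Evar i I)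
    {j : Fin n} (hj : s < j) : v j = 0 :=
  hv.2 j (by rw [Fin.lt_def] at hj; omega)

lemma Evar_succ_eq (hs : (s : ℕ) + 1 = n - i) : Evar (i + 1) I = {m ∈ Evar i I | m s = 0} := by
  ext m
  refine ⟨fun ⟨hm, hm0⟩ => ⟨⟨hm, fun j hj => hm0 j (by omega)⟩, hm0 s (by omega)⟩,
    fun ⟨⟨hm, hm0⟩, hms⟩ => ⟨hm, fun j hj => ?_⟩⟩
  rcases eq_or_ne j s with rfl | hjs
  · exact hms
  · exact hm0 j (by have := Fin.val_ne_of_ne hjs; omega)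

lemma exists_isHomogeneous_mem_Jtil_notMem_Jlow_iff (hs : (s : ℕ) + 1 = n - i) (r : ℕ) :
    (∃ f : MvPolynomial (Fin n) k, f ∈ Jtil i I ∧ f ∈ supported k {j : Fin n | (j : ℕ) < n - i} ∧
        f.IsHomogeneous r ∧ f ∉ Jlow i I) ↔
      r ∈ degOf '' quotExponents (Evar i I) s := by
  rw [Jtil_eq_monomialIdeal hs, Jlow_eq_monomialIdeal]
  constructor
  · rintro ⟨f, hfJtil, hfS, hfr, hfJlow⟩
    obtain ⟨ν, hν, hνJlow⟩ : ∃ ν ∈ f.support, ∀ m ∈ Evar i I, ¬ m ≤ ν := by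
      simpa [mem_monomialIdeal_iff] using hfJlow
    obtain ⟨_, ⟨v, hv, rfl⟩, hvν⟩ := mem_monomialIdeal_iff.mp hfJtil ν hν
    refine ⟨ν, ⟨fun j hj => apply_eq_zero_of_mem_supported hfS hν ?_, ⟨v, hv, hvν⟩, hνJlow⟩, ?_⟩
    · have := Fin.lt_def.mp hj
      change ¬ (j : ℕ) < n - i
      omega
    · rw [degOf_eq_degree, Finsupp.degree_eq_weight_one]
      exact hfr (mem_support_iff.mp hν)
  · rintro ⟨ν, ⟨hν0, ⟨v, hv, hvν⟩, hνJlow⟩, rfl⟩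
    refine ⟨monomial ν 1, monomial_mem_monomialIdeal_iff.mpr ⟨_, ⟨v, hv, rfl⟩, hvν⟩, ?_,
      isHomogeneous_monomial _ ?_, fun h => ?_⟩
    · rw [mem_supported, vars_monomial one_ne_zero]
      intro j hj
      have : ¬ s < j := fun hsj => Finsupp.mem_support_iff.mp hj (hν0 j hsj)
      change (j : ℕ) < n - i
      omega
    · rfl
    · obtain ⟨m, hm, hmν⟩ := monomial_mem_monomialIdeal_iff.mp h
      exact hνJlow m hm hmν

end EvaluatedInitialIdeal

/-- Lemma 4.1: `c_i(I) < ∞` iff for every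
`a ∈ p_{n-i}(E_i) \ E_{i+1}` there are `b_j ∈ E_{i+1}` with `p_j(a) ≥ p_j(b_j)`
for each `j = 1, …, n-i-1`. -/
theorem stmt_9 {k : Type*} [Field k] {n : ℕ} (I : Ideal (MvPolynomial (Fin n) k))
    (i : ℕ) (hi : i < n) :
    cInv i I < ⊤ ↔
      ∀ a : Fin n →₀ ℕ,
        (∃ v ∈ Evar i I, a = Finsupp.erase (⟨n - i - 1, by omega⟩ : Fin n) v) →
        a ∉ Evar (i + 1) I →
        ∀ j : Fin n, (j : ℕ) < n - i - 1 →
          ∃ b ∈ Evar (i + 1) I, ∀ l : Fin n, l ≠ j → b l ≤ a l := by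
  set s : Fin n := ⟨n - i - 1, by omega⟩
  have hs : (s : ℕ) + 1 = n - i := Nat.sub_add_cancel (by omega)
  calc cInv i I < ⊤ ↔ BddAbove (degOf '' quotExponents (Evar i I) s) := by
        rw [cInv, sSup_natW_lt_top_iff]
        exact iff_of_eq (congrArg BddAbove
          (Set.ext (exists_isHomogeneous_mem_Jtil_notMem_Jlow_iff hs)))
    _ ↔ _ := by
        rw [bddAbove_degOf_quotExponents_iff Evar_finite
          fun _ hv _ => apply_eq_zero_of_mem_Evar hs hv, Evar_succ_eq hs]
        rfl
end
end

section
/- Let J ⊂ k[x_1,...,x_s] be a monomial ideal with minimal generating lattice set E ⊂ ℕ^s, and let Ĵ be the monomial ideal generated by the monomials obtained from generators of J by setting x_s = 1. Define F as the set of vectors a = max(v_1,...,v_s) - (1,...,1) where v_1,...,v_s ∈ E satisfy: the j-th coordinate of v_j exceeds the j-th coordinate of v_h for all h ≠ j, and a ≱ v for all v ∈ E. Assume Ĵ/J has finite length. Then sup{ r : (Ĵ/J)_r ≠ 0 } = -∞ if F = ∅, and equals max_{a ∈ F} |a| otherwise, where |a| is the sum of coordinates of a. -/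
open MvPolynomial

noncomputable section

variable {k : Type*} [Field k] {n : ℕ}

/-!
Both ideals are monomial, so `(J̃/J)_r ≠ 0` exactly when some exponent `μ` of degree `r` lies
above `v` with its last coordinate erased for some `v ∈ E`, but above no element of `E`. Every
corner is such a `μ` (take `v = v_s`). Conversely, from such a `μ` raise one coordinate at a time
while staying outside `J`; finite length bounds the degree, so the climb stops, and an exponent
all of whose successors `μ + e_j` lie in `J` is a corner.
-/

@[simp]
lemma natW_le_natW {r r' : ℕ} : natW r ≤ natW r' ↔ r ≤ r' := by
  simp [natW]

lemma exists_le_natW_of_lt_top {b : WithBot ℕ∞} (hb : b < ⊤) : ∃ N : ℕ, b ≤ natW N := by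
  induction b using WithBot.recBotCoe with
  | bot => exact ⟨0, bot_le⟩
  | coe t =>
    induction t using ENat.recTopCoe with
    | top => exact absurd hb (lt_irrefl _)
    | coe t => exact ⟨t, le_rfl⟩

lemma exists_forall_le_of_sSup_natW_lt_top {p : ℕ → Prop}
    (h : sSup {x : WithBot ℕ∞ | ∃ r, x = natW r ∧ p r} < ⊤) : ∃ N, ∀ r, p r → r ≤ N := by
  obtain ⟨N, hN⟩ := exists_le_natW_of_lt_top h
  refine ⟨N, fun r hr => natW_le_natW.mp (le_trans ?_ hN)⟩
  exact le_sSup ⟨r, rfl, hr⟩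

theorem exists_isHomogeneous_mem_span_monomial_notMem_iff {σ R : Type*} [CommSemiring R]
    [Nontrivial R] {A B : Set (σ →₀ ℕ)} {r : ℕ} :
    (∃ f : MvPolynomial σ R, f.IsHomogeneous r ∧
        f ∈ Ideal.span ((fun v => monomial v (1 : R)) '' B) ∧
        f ∉ Ideal.span ((fun v => monomial v (1 : R)) '' A)) ↔
      ∃ μ : σ →₀ ℕ, μ.degree = r ∧ (∃ b ∈ B, b ≤ μ) ∧ ∀ a ∈ A, ¬ a ≤ μ := by
  classical
  simp only [mem_ideal_span_monomial_image]
  constructor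
  · rintro ⟨f, hf, hB, hA⟩
    push Not at hA
    obtain ⟨μ, hμ, hμA⟩ := hA
    refine ⟨μ, ?_, hB μ hμ, hμA⟩
    rw [Finsupp.degree_eq_weight_one]
    exact hf (mem_support_iff.mp hμ)
  · rintro ⟨μ, rfl, hμB, hμA⟩
    refine ⟨monomial μ 1, isHomogeneous_monomial _ rfl, ?_, ?_⟩ <;>
      simp only [support_monomial, one_ne_zero, if_false, Finset.mem_singleton, forall_eq]
    · exact hμB
    · push Not
      exact hμA

lemma Finsupp.apply_eq_add_one_of_le_add_single {ι : Type*} {w μ : ι →₀ ℕ} {j : ι}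
    (h : w ≤ μ + Finsupp.single j 1) (h' : ¬ w ≤ μ) : w j = μ j + 1 ∧ ∀ l ≠ j, w l ≤ μ l := by
  classical
  have hle : ∀ l, w l ≤ μ l + if j = l then 1 else 0 := fun l => by
    simpa [Finsupp.single_apply] using h l
  have hoff : ∀ l ≠ j, w l ≤ μ l := fun l hl => by simpa [Ne.symm hl] using hle l
  refine ⟨?_, hoff⟩
  obtain ⟨l, hl⟩ : ∃ l, μ l < w l := by simpa [Finsupp.le_def] using h'
  obtain rfl : l = j := by_contra fun hlj => (hoff l hlj).not_gt hl
  have := hle l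
  simp only [if_true] at this
  omega

lemma degOf_add_single {n : ℕ} (μ : Fin n →₀ ℕ) (j : Fin n) :
    degOf (μ + Finsupp.single j 1) = degOf μ + 1 := by
  change Finsupp.degree _ = Finsupp.degree _ + 1
  rw [map_add, Finsupp.degree_single]

lemma erase_le_of_mem_corners {s : ℕ} {E : Set (Fin s →₀ ℕ)} {a : Fin s →₀ ℕ}
    (ha : a ∈ corners E) (i : Fin s) : ∃ v ∈ E, Finsupp.erase i v ≤ a := by
  obtain ⟨⟨v, hvE, hstrict, hsup⟩, -⟩ := ha
  refine ⟨v i, hvE i, fun l => ?_⟩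
  rcases eq_or_ne l i with rfl | hl
  · simp
  · have hlt : v i l < v l l := hstrict l i hl.symm
    have hmax : v l l ≤ Finset.univ.sup fun j => v j l :=
      Finset.le_sup (f := fun j => v j l) (Finset.mem_univ l)
    rw [Finsupp.erase_ne hl]
    have := hsup l
    omega

/-- The vectors `v j` of the corner condition are the elements of `E` below `μ + e_j`: none lies
below `μ`, so the `j`-th coordinate is the only one in which they exceed `μ`. -/
lemma mem_corners_of_forall_le_add_single {s : ℕ} {E : Set (Fin s →₀ ℕ)} {μ : Fin s →₀ ℕ}
    (hμ : ∀ w ∈ E, ¬ w ≤ μ) (hsucc : ∀ j, ∃ w ∈ E, w ≤ μ + Finsupp.single j 1) :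
    μ ∈ corners E := by
  have hW : ∀ j, ∃ w ∈ E, w j = μ j + 1 ∧ ∀ l ≠ j, w l ≤ μ l := fun j => by
    obtain ⟨w, hw, hle⟩ := hsucc j
    exact ⟨w, hw, Finsupp.apply_eq_add_one_of_le_add_single hle (hμ w hw)⟩
  choose W hWE hWj hWne using hW
  refine ⟨⟨W, hWE, fun j h hhj => ?_, fun l => ?_⟩, hμ⟩
  · have := hWne h j hhj.symm
    have := hWj j
    omega
  · refine le_antisymm ?_ (Finset.sup_le fun j _ => ?_)
    · rw [← hWj l]
      exact Finset.le_sup (f := fun j => W j l) (Finset.mem_univ l)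
    · rcases eq_or_ne l j with rfl | hlj
      · exact (hWj l).le
      · exact (hWne j l hlj).trans (Nat.le_succ _)

/-- Climb from `μ` by unit steps that stay outside the upward closure of `E`; the degree bound `N`
forces the climb to stop, and it can only stop at a corner. -/
theorem exists_mem_corners_degOf_le {s : ℕ} {E : Set (Fin s →₀ ℕ)}
    {P : (Fin s →₀ ℕ) → Prop} (hP : Monotone P) {N : ℕ}
    (hN : ∀ μ, P μ → (∀ w ∈ E, ¬ w ≤ μ) → degOf μ ≤ N) (μ : Fin s →₀ ℕ) (hμ : P μ)
    (hμE : ∀ w ∈ E, ¬ w ≤ μ) : ∃ a ∈ corners E, degOf μ ≤ degOf a := by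
  by_cases hsucc : ∀ j, ∃ w ∈ E, w ≤ μ + Finsupp.single j 1
  · exact ⟨μ, mem_corners_of_forall_le_add_single hμE hsucc, le_rfl⟩
  · push Not at hsucc
    obtain ⟨j, hj⟩ := hsucc
    obtain ⟨a, ha, hle⟩ := exists_mem_corners_degOf_le hP hN (μ + Finsupp.single j 1)
      (hP le_self_add hμ) hj
    rw [degOf_add_single] at hle
    exact ⟨a, ha, by omega⟩
termination_by N + 1 - degOf μ
decreasing_by
  have := hN μ hμ hμE
  rw [degOf_add_single]
  omega

/-- Proposition 4.2: for a monomial ideal `J ⊆ k[x₁,…,x_s]` with minimal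
generating lattice set `E` and `J̃` obtained by setting `x_s = 1`, if `J̃/J` has finite
length then `sup { r : (J̃/J)_r ≠ 0 }` equals `-∞` if the corner set `F` is empty and
`max_{a ∈ F} |a|` otherwise. -/
theorem stmt_10 {k : Type*} [Field k] (s : ℕ) (hs : 0 < s) (E : Set (Fin s →₀ ℕ))
    (J Jt : Ideal (MvPolynomial (Fin s) k))
    (hJ : J = Ideal.span ((fun v => monomial v (1 : k)) '' E))
    (hJt : Jt = Ideal.span
      ((fun v => monomial (Finsupp.erase (⟨s - 1, by omega⟩ : Fin s) v) (1 : k)) '' E))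
    (hfin : sSup {x : WithBot ℕ∞ | ∃ r : ℕ, x = natW r ∧
        ∃ f : MvPolynomial (Fin s) k, f.IsHomogeneous r ∧ f ∈ Jt ∧ f ∉ J} < ⊤) :
    sSup {x : WithBot ℕ∞ | ∃ r : ℕ, x = natW r ∧
        ∃ f : MvPolynomial (Fin s) k, f.IsHomogeneous r ∧ f ∈ Jt ∧ f ∉ J}
      = sSup {x : WithBot ℕ∞ | ∃ a ∈ corners E, x = natW (degOf a)} := by
  set last : Fin s := ⟨s - 1, by omega⟩
  set P : (Fin s →₀ ℕ) → Prop := fun μ => ∃ v ∈ E, Finsupp.erase last v ≤ μ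
  have hP : Monotone P := fun μ ν h ⟨v, hv, hle⟩ => ⟨v, hv, hle.trans h⟩
  have hgap : ∀ r, (∃ f : MvPolynomial (Fin s) k, f.IsHomogeneous r ∧ f ∈ Jt ∧ f ∉ J) ↔
      ∃ μ, degOf μ = r ∧ P μ ∧ ∀ w ∈ E, ¬ w ≤ μ := fun r => by
    rw [hJ, hJt, ← Set.image_image (g := fun v => monomial v (1 : k)),
      exists_isHomogeneous_mem_span_monomial_notMem_iff]
    simp only [Set.exists_mem_image, P]
    rfl
  simp only [hgap] at hfin ⊢
  obtain ⟨N, hN⟩ := exists_forall_le_of_sSup_natW_lt_top hfin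
  apply le_antisymm
  · refine sSup_le ?_
    rintro _ ⟨_, rfl, μ, rfl, hμ, hμE⟩
    obtain ⟨a, ha, hle⟩ := exists_mem_corners_degOf_le hP
      (fun μ hμ hμE => hN _ ⟨μ, rfl, hμ, hμE⟩) μ hμ hμE
    exact (natW_le_natW.mpr hle).trans (le_sSup ⟨a, ha, rfl⟩)
  · refine sSup_le_sSup ?_
    rintro _ ⟨a, ha, rfl⟩
    exact ⟨_, rfl, a, rfl, erase_le_of_mem_corners ha last, ha.2⟩
end
end

section
/- Let S = k[x_1,...,x_n], I a homogeneous ideal, and z a linear form. If y is a homogeneous element of degree r_0 with y z^m ∈ I for some m ≥ 1, where r_0 = max{ r : [⋃_{m≥1} I : z^m]_r ≠ I_r }, then y z ∈ I, i.e., y ∈ (I : z). Consequently sup{ r : (I:z)_r ≠ I_r } = max{ r : [⋃_{m≥1} I:z^m]_r ≠ I_r } whenever the right-hand side is finite. -/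
open MvPolynomial

noncomputable section

variable {k : Type*} [Field k] {n : ℕ}

private lemma natW_le {r s : ℕ} : natW r ≤ natW s ↔ r ≤ s := by
  simp [natW]

private lemma mulpow_mono {R : Type*} [CommRing R] {I : Ideal R} {f z : R} {a b : ℕ}
    (hab : a ≤ b) (h : f * z ^ a ∈ I) : f * z ^ b ∈ I := by
  obtain ⟨c, rfl⟩ := Nat.exists_eq_add_of_le hab
  rw [pow_add, ← mul_assoc]
  exact I.mul_mem_right _ h

private lemma mem_satIdeal {k : Type*} [Field k] {n : ℕ} (I : Ideal (MvPolynomial (Fin n) k))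
    (z f : MvPolynomial (Fin n) k) :
    f ∈ satIdeal I z ↔ ∃ m : ℕ, f * z ^ (m + 1) ∈ I := by
  unfold satIdeal
  rw [Submodule.mem_iSup_of_directed]
  · simp only [Ideal.mem_colon_span_singleton]
  · intro a b
    refine ⟨max a b, fun x hx => ?_, fun x hx => ?_⟩ <;>
    · rw [Ideal.mem_colon_span_singleton] at hx ⊢
      exact mulpow_mono (by omega) hx

/-- case `i = 0` of Lemma 2.2: if
`r₀ = max { r : [⋃_{m≥1} I : z^m]_r ≠ I_r }` (assumed finite) and `y` is homogeneous of
degree `r₀` with `y z^m ∈ I` for some `m ≥ 1`, then `y z ∈ I`; consequently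
`sup { r : (I : z)_r ≠ I_r } = r₀`. -/
theorem stmt_19 {k : Type*} [Field k] {n : ℕ} (I : Ideal (MvPolynomial (Fin n) k))
    (hI : HomogIdeal I) (z : MvPolynomial (Fin n) k) (hz : z.IsHomogeneous 1) (r0 : ℕ)
    (hr0 : topDiff (satIdeal I z) I = natW r0) :
    (∀ y : MvPolynomial (Fin n) k, y.IsHomogeneous r0 →
        (∃ m : ℕ, 1 ≤ m ∧ y * z ^ m ∈ I) → y * z ∈ I)
      ∧ topDiff (I.colon (Ideal.span {z})) I = natW r0 := by
  have hIsat : I ≤ satIdeal I z := by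
    intro f hf
    rw [mem_satIdeal]
    exact ⟨0, I.mul_mem_right _ hf⟩
  -- any degree where sat and I differ is ≤ r0
  have hub : ∀ r : ℕ,
      (¬ ∀ f : MvPolynomial (Fin n) k, f.IsHomogeneous r → (f ∈ satIdeal I z ↔ f ∈ I)) →
      r ≤ r0 := by
    intro r h
    have h' : natW r ≤ topDiff (satIdeal I z) I := by
      unfold topDiff
      exact le_sSup ⟨r, rfl, h⟩
    rw [hr0] at h'
    exact natW_le.mp h'
  -- the top degree is attained
  have hmax : ¬ ∀ f : MvPolynomial (Fin n) k, f.IsHomogeneous r0 →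
      (f ∈ satIdeal I z ↔ f ∈ I) := by
    intro hcon
    by_cases h0 : r0 = 0
    · subst h0
      have hb : topDiff (satIdeal I z) I ≤ ⊥ := by
        unfold topDiff
        apply sSup_le
        rintro x ⟨r, rfl, hr⟩
        have hle := hub r hr
        have : r = 0 := by omega
        subst this
        exact (hr hcon).elim
      rw [hr0] at hb
      simp [natW] at hb
    · have hb : topDiff (satIdeal I z) I ≤ natW (r0 - 1) := by
        unfold topDiff
        apply sSup_le
        rintro x ⟨r, rfl, hr⟩
        apply natW_le.mpr
        have hle := hub r hr
        rcases eq_or_lt_of_le hle with h | h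
        · subst h; exact (hr hcon).elim
        · omega
      rw [hr0] at hb
      have := natW_le.mp hb
      omega
  have part1 : ∀ y : MvPolynomial (Fin n) k, y.IsHomogeneous r0 →
      (∃ m : ℕ, 1 ≤ m ∧ y * z ^ m ∈ I) → y * z ∈ I := by
    rintro y hy ⟨m, hm, hyz⟩
    have hsat : y * z ∈ satIdeal I z := by
      rw [mem_satIdeal]
      exact ⟨m, by
        rw [show y * z * z ^ (m + 1) = y * z ^ m * z ^ 2 by ring]
        exact I.mul_mem_right _ hyz⟩
    have hhom : (y * z).IsHomogeneous (r0 + 1) := hy.mul hz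
    by_contra hnI
    have hP1 : ¬ ∀ f : MvPolynomial (Fin n) k, f.IsHomogeneous (r0 + 1) →
        (f ∈ satIdeal I z ↔ f ∈ I) := fun h => hnI ((h _ hhom).mp hsat)
    have := hub _ hP1
    omega
  refine ⟨part1, ?_⟩
  have hcolsat : I.colon (Ideal.span {z}) ≤ satIdeal I z := by
    intro f hf
    rw [Ideal.mem_colon_span_singleton] at hf
    rw [mem_satIdeal]
    exact ⟨0, by simpa using hf⟩
  apply le_antisymm
  · unfold topDiff
    apply sSup_le
    rintro x ⟨r, rfl, hr⟩
    apply natW_le.mpr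
    apply hub
    intro hall
    apply hr
    intro f hf
    constructor
    · intro hcol
      exact (hall f hf).mp (hcolsat hcol)
    · intro hfI
      rw [Ideal.mem_colon_span_singleton]
      exact I.mul_mem_right _ hfI
  · rw [not_forall] at hmax
    obtain ⟨f, hf2⟩ := hmax
    obtain ⟨hf, hne⟩ := _root_.not_imp.mp hf2
    have hfI : f ∉ I := fun h => hne ⟨fun _ => h, fun _ => hIsat h⟩
    have hfsat : f ∈ satIdeal I z := by
      by_contra hc
      exact hne ⟨fun h => (hc h).elim, fun h => (hfI h).elim⟩
    obtain ⟨m, hm⟩ := (mem_satIdeal I z f).mp hfsat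
    have hfcol : f ∈ I.colon (Ideal.span {z}) :=
      Ideal.mem_colon_span_singleton.mpr (part1 f hf ⟨m + 1, by omega, hm⟩)
    unfold topDiff
    exact le_sSup ⟨r0, rfl, fun hall => hfI ((hall f hf).mp hfcol)⟩
end
end
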